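/- For local biretractions α, β of a commutative Hopf algebroid H over A, the inverse of the restricted bijection (α∗β)∘t : A·e^{α∗β} → A·(α∗β)(1_H) equals the composition (α∘t)^{-1} ∘ (β∘t)^{-1} of the inverses of the restricted bijections. -/

import Mathlib

open TensorProduct

/-- The unital ideal `A·e` generated by an element `e` of a commutative ring. -/
def idealOf {A : Type*} [CommRing A] (e : A) : Set A := Set.range (fun a => a * e)

/-- A commutative Hopf algebroid over a commutative base algebra `A`:
a commutative algebra `H` with source and target maps `s, t : A → H`,
comultiplication `Δ`, counit `ε` and antipode `S` satisfying the standard axioms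
(`S∘t = s`, `S∘s = t`, `S(h₍₁₎)h₍₂₎ = s(ε h)`, `h₍₁₎S(h₍₂₎) = t(ε h)`, etc.). -/
structure CommHopfAlgebroid (k A H : Type*) [CommRing k] [CommRing A] [CommRing H]
    [Algebra k A] [Algebra k H] where
  s : A →ₐ[k] H
  t : A →ₐ[k] H
  comul : H →ₐ[k] H ⊗[k] H
  counit : H →ₐ[k] A
  antipode : H →ₐ[k] H
  coassoc :
    (TensorProduct.assoc k H H H).toLinearMap ∘ₗ
      (TensorProduct.map comul.toLinearMap LinearMap.id) ∘ₗ comul.toLinearMap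
    = (TensorProduct.map LinearMap.id comul.toLinearMap) ∘ₗ comul.toLinearMap
  counit_left : (LinearMap.mul' k H) ∘ₗ
      (TensorProduct.map (t.toLinearMap ∘ₗ counit.toLinearMap) LinearMap.id) ∘ₗ
        comul.toLinearMap = LinearMap.id
  counit_right : (LinearMap.mul' k H) ∘ₗ
      (TensorProduct.map LinearMap.id (s.toLinearMap ∘ₗ counit.toLinearMap)) ∘ₗ
        comul.toLinearMap = LinearMap.id
  counit_s : ∀ a : A, counit (s a) = a
  counit_t : ∀ a : A, counit (t a) = a
  antipode_s : ∀ a : A, antipode (s a) = t a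
  antipode_t : ∀ a : A, antipode (t a) = s a
  comul_t : ∀ a : A, comul (t a) = t a ⊗ₜ[k] 1
  comul_s : ∀ a : A, comul (s a) = 1 ⊗ₜ[k] s a
  antipode_left : (LinearMap.mul' k H) ∘ₗ
      (TensorProduct.map antipode.toLinearMap LinearMap.id) ∘ₗ comul.toLinearMap
    = s.toLinearMap ∘ₗ counit.toLinearMap
  antipode_right : (LinearMap.mul' k H) ∘ₗ
      (TensorProduct.map LinearMap.id antipode.toLinearMap) ∘ₗ comul.toLinearMap
    = t.toLinearMap ∘ₗ counit.toLinearMap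

variable {k A H : Type*} [CommRing k] [CommRing A] [CommRing H] [Algebra k A] [Algebra k H]

/-- The convolution product of right `A`-linear maps `H → A`:
`(α ∗ β)(h) = β(t(α(h₍₁₎)) · h₍₂₎) = β(t(α(h₍₁₎))) · β(h₍₂₎)`. -/
noncomputable def brtConv (D : CommHopfAlgebroid k A H) (α β : H →ₗ[k] A) : H →ₗ[k] A :=
  β ∘ₗ (LinearMap.mul' k H) ∘ₗ
    (TensorProduct.map (D.t.toLinearMap ∘ₗ α) LinearMap.id) ∘ₗ D.comul.toLinearMap

/-- `e` is a witness for axiom (BRT2) of a local biretraction `α`: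
`α(t(e)) = α(1)` and `α∘t` restricts to a bijection `A·e → A·α(1)`. -/
def IsBrtWitness (D : CommHopfAlgebroid k A H) (α : H →ₗ[k] A) (e : A) : Prop :=
  α (D.t e) = α 1 ∧ Set.BijOn (fun a => α (D.t a)) (idealOf e) (idealOf (α 1))

/-- A local biretraction of a commutative Hopf algebroid: a linear multiplicative
map `α : H → A` satisfying (BRT1) `α(s(a)) = a·α(1)` and (BRT2). -/
def IsBiretraction (D : CommHopfAlgebroid k A H) (α : H →ₗ[k] A) : Prop :=
  (∀ x y : H, α (x * y) = α x * α y) ∧ (∀ a : A, α (D.s a) = a * α 1) ∧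
    ∃ e : A, IsBrtWitness D α e

/-
Multiplicativity makes `α(1)` idempotent and gives `(α∗β)(t a) = β(t(α(t a)))`.
For the right inverse, `y ∈ A·(α∗β)(1) = A·β(t(α 1))` is `β(t u)` for a unique `u ∈ A·e^β`;
since `β(t(α 1))` is idempotent, `β(t(u·α(1))) = y·β(t(α 1)) = y`, so injectivity of `β∘t` on
`A·e^β` gives `u·α(1) = u`, i.e. `u ∈ A·α(1)`, where `(α∘t)⁻¹` is a right inverse of `α∘t`.
For the left inverse, `z ∈ A·x ⊆ A·e^α` and `α(t z) ∈ A·α(t x) ⊆ A·e^β`, so the two inverses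
undo `β∘t` and `α∘t` in turn.
-/

section idealOf

variable {R S : Type*} [CommRing R] [CommRing S]

theorem self_mem_idealOf (e : R) : e ∈ idealOf e := ⟨1, one_mul e⟩

theorem mem_idealOf_one (y : R) : y ∈ idealOf 1 := ⟨y, mul_one y⟩

theorem mul_mem_idealOf {e y : R} (hy : y ∈ idealOf e) (c : R) : y * c ∈ idealOf e := by
  obtain ⟨a, rfl⟩ := hy
  exact ⟨a * c, by ring⟩

theorem idealOf_subset_of_mem {e e' : R} (he : e ∈ idealOf e') : idealOf e ⊆ idealOf e' := by
  rintro _ ⟨a, rfl⟩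
  obtain ⟨b, rfl⟩ := he
  exact ⟨a * b, mul_assoc a b e'⟩

theorem IsIdempotentElem.mul_eq_self_of_mem_idealOf {e y : R} (he : IsIdempotentElem e)
    (hy : y ∈ idealOf e) : y * e = y := by
  obtain ⟨a, rfl⟩ := hy
  rw [mul_assoc, he.eq]

theorem map_mem_idealOf (f : R →ₙ* S) {x z : R} (hz : z ∈ idealOf x) : f z ∈ idealOf (f x) := by
  obtain ⟨c, rfl⟩ := hz
  exact ⟨f c, (map_mul f c x).symm⟩

/-- Both `u` and `u * a` lie in `R·e` and are sent to `f u`. -/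
theorem mem_idealOf_of_map_mem_idealOf (f : R →ₙ* S) {e a u : R} (ha : IsIdempotentElem a)
    (hinj : Set.InjOn f (idealOf e)) (hu : u ∈ idealOf e) (hfu : f u ∈ idealOf (f a)) :
    u ∈ idealOf a :=
  ⟨u, hinj (mul_mem_idealOf hu a) hu <| by
    rw [map_mul, (ha.map f).mul_eq_self_of_mem_idealOf hfu]⟩

end idealOf

theorem brtConv_apply_t (D : CommHopfAlgebroid k A H) (α β : H →ₗ[k] A) (a : A) :
    brtConv D α β (D.t a) = β (D.t (α (D.t a))) := by
  simp [brtConv, D.comul_t a, LinearMap.mul'_apply]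

theorem brtConv_apply_one (D : CommHopfAlgebroid k A H) (α β : H →ₗ[k] A) :
    brtConv D α β 1 = β (D.t (α 1)) := by
  simpa using brtConv_apply_t D α β 1

theorem brtConv_inverse_is_composition_general (D : CommHopfAlgebroid k A H)
    (α β : H →ₗ[k] A) (hα : IsBiretraction D α) (hβ : IsBiretraction D β)
    (eα eβ : A) (heβ : IsBrtWitness D β eβ)
    (invα invβ : A →ₗ[k] A)
    (hinvα1 : ∀ x ∈ idealOf eα, invα (α (D.t x)) = x)
    (hinvα2 : ∀ y ∈ idealOf (α 1), α (D.t (invα y)) = y)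
    (hinvβ1 : ∀ x ∈ idealOf eβ, invβ (β (D.t x)) = x)
    (x : A) (hx : x ∈ idealOf eα) (hαx : α (D.t x) = eβ * α 1) :
    (∀ y ∈ idealOf (brtConv D α β 1), brtConv D α β (D.t (invα (invβ y))) = y) ∧
    (∀ z ∈ idealOf x, invα (invβ (brtConv D α β (D.t z))) = z) := by
  let αM : H →ₙ* A := ⟨α, hα.1⟩
  let βM : H →ₙ* A := ⟨β, hβ.1⟩
  let t : A →ₙ* H := D.t
  constructor
  · intro y hy
    rw [brtConv_apply_one] at hy
    have hyβ : y ∈ idealOf (β 1) :=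
      idealOf_subset_of_mem (map_mem_idealOf βM (mem_idealOf_one (D.t (α 1)))) hy
    obtain ⟨u, hu, rfl⟩ := heβ.2.surjOn hyβ
    have huα : u ∈ idealOf (α 1) :=
      mem_idealOf_of_map_mem_idealOf (βM.comp t) (IsIdempotentElem.one.map αM)
        heβ.2.injOn hu hy
    rw [hinvβ1 u hu, brtConv_apply_t, hinvα2 u huα]
  · intro z hz
    have hαz : α (D.t z) ∈ idealOf eβ := by
      refine idealOf_subset_of_mem ?_ (map_mem_idealOf (αM.comp t) hz)
      exact hαx ▸ mul_mem_idealOf (self_mem_idealOf eβ) (α 1)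
    rw [brtConv_apply_t, hinvβ1 _ hαz, hinvα1 z (idealOf_subset_of_mem hx hz)]

/-- **`((α∗β)∘t)⁻¹ = (α∘t)⁻¹ ∘ (β∘t)⁻¹`.** For local biretractions `α, β` with
(BRT2)-witnesses `e^α, e^β` and inverses `invα, invβ` of the restricted bijections
`α∘t : A·e^α → A·α(1)` and `β∘t : A·e^β → A·β(1)`, the composite `invα ∘ invβ` is a
two-sided inverse of the restricted bijection
`(α∗β)∘t : A·e^{α∗β} → A·(α∗β)(1)`, where `e^{α∗β} = x = (α∘t)⁻¹(e^β·α(1))`. -/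
theorem brtConv_inverse_is_composition (D : CommHopfAlgebroid k A H)
    (α β : H →ₗ[k] A) (hα : IsBiretraction D α) (hβ : IsBiretraction D β)
    (eα eβ : A) (heα : IsBrtWitness D α eα) (heβ : IsBrtWitness D β eβ)
    (invα invβ : A →ₗ[k] A)
    (hinvα1 : ∀ x ∈ idealOf eα, invα (α (D.t x)) = x)
    (hinvα2 : ∀ y ∈ idealOf (α 1), α (D.t (invα y)) = y)
    (hinvβ1 : ∀ x ∈ idealOf eβ, invβ (β (D.t x)) = x)
    (hinvβ2 : ∀ y ∈ idealOf (β 1), β (D.t (invβ y)) = y)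
    (x : A) (hx : x ∈ idealOf eα) (hαx : α (D.t x) = eβ * α 1) :
    (∀ y ∈ idealOf (brtConv D α β 1), brtConv D α β (D.t (invα (invβ y))) = y) ∧
    (∀ z ∈ idealOf x, invα (invβ (brtConv D α β (D.t z))) = z) :=
  brtConv_inverse_is_composition_general D α β hα hβ eα eβ heβ invα invβ hinvα1 hinvα2 hinvβ1 x hx
    hαx
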